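/- arXiv:2007.11076 — 3 statements merged into one kernel-verified Lean document; each statement's English description precedes it below -/
import Mathlib

section
/- Let L: V₁ → V₂ be a linear operator between Banach spaces and C₁ ⊂ V₁, C₂ ⊂ V₂ closed convex cones with L(C₁) ⊂ C₂. If Δ = diam_{Θ₂}(L(C₁)) < ∞, then Θ₂(L(φ), L(ψ)) ≤ (1 − e^{−Δ})·Θ₁(φ, ψ) for all φ, ψ ∈ C₁. -/
open scoped ENNReal

/-- A cone `C ⊆ V \ {0}`. -/
structure IsCone {V : Type*} [NormedAddCommGroup V] [NormedSpace ℝ V] (C : Set V) : Prop where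
  zero_not_mem : (0 : V) ∉ C
  neg_not_mem : ∀ v ∈ C, -v ∉ C
  smul_mem : ∀ v ∈ C, ∀ t : ℝ, 0 < t → t • v ∈ C

/-- A closed convex cone. -/
structure IsClosedConvexCone {V : Type*} [NormedAddCommGroup V] [NormedSpace ℝ V]
    (C : Set V) extends IsCone C : Prop where
  add_mem : ∀ v ∈ C, ∀ w ∈ C, ∀ a b : ℝ, 0 < a → 0 < b → a • v + b • w ∈ C
  closed : closure C ⊆ C ∪ {0}

/-- `A(v,w) = sup {t > 0 : w - t v ∈ C}`, with `sup ∅ = 0`. -/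
noncomputable def coneA {V : Type*} [NormedAddCommGroup V] [NormedSpace ℝ V]
    (C : Set V) (v w : V) : ℝ≥0∞ :=
  sSup (ENNReal.ofReal '' {t : ℝ | 0 < t ∧ w - t • v ∈ C})

/-- `B(v,w) = inf {s > 0 : s v - w ∈ C}`, with `inf ∅ = +∞`. -/
noncomputable def coneB {V : Type*} [NormedAddCommGroup V] [NormedSpace ℝ V]
    (C : Set V) (v w : V) : ℝ≥0∞ :=
  sInf (ENNReal.ofReal '' {s : ℝ | 0 < s ∧ s • v - w ∈ C})

/-- The projective pseudo-metric `Θ(v,w) = log (B(v,w) / A(v,w)) ∈ [0, +∞]`. -/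
noncomputable def coneTheta {V : Type*} [NormedAddCommGroup V] [NormedSpace ℝ V]
    (C : Set V) (v w : V) : EReal :=
  ENNReal.log (coneB C v w / coneA C v w)

/-!
If `ψ - t φ` and `s φ - ψ` lie in `C₁`, their images `x`, `y` lie in `C₂` and `Θ₂(x, y) ≤ Δ`,
so `y - a x` and `b x - y` lie in `C₂` for scalars with `a / b` as close to `e^{-Δ}` (or above)
as we like. Recombining, `L ψ` is squeezed between two multiples of `L φ` whose ratio is
`((r + a) / (1 + a)) / ((r + b) / (1 + b))`, `r = s / t`, and by Bernoulli's inequality this is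
at most `r ^ (1 - a / b)`. Letting `a, b` and then `t, s` tend to their extremal values gives
`B₂ / A₂ ≤ (B₁ / A₁) ^ (1 - e^{-Δ})`, and one takes logarithms.
-/

open Filter Topology

theorem div_one_add_mul_sub_one_le_rpow {r k : ℝ} (hr : 1 ≤ r) (hk0 : 0 ≤ k) (hk1 : k ≤ 1) :
    r / (1 + k * (r - 1)) ≤ r ^ (1 - k) := by
  have hr0 : 0 < r := by linarith
  have hbern : r ^ k ≤ 1 + k * (r - 1) := by
    simpa using rpow_one_add_le_one_add_mul_self (s := r - 1) (by linarith) hk0 hk1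
  rw [Real.rpow_sub hr0, Real.rpow_one]
  exact div_le_div_of_nonneg_left hr0.le (Real.rpow_pos_of_pos hr0 k) hbern

/-- `r b (1 + a) (r + b) - (r + a) (1 + b) (b + a (r - 1))` factors as
`(r - 1) (b - a) (r + a (1 + b))`. -/
theorem div_div_div_le_div_one_add_mul {r a b : ℝ} (hr : 1 ≤ r) (ha : 0 < a) (hab : a ≤ b) :
    (r + a) / (1 + a) / ((r + b) / (1 + b)) ≤ r / (1 + a / b * (r - 1)) := by
  have hb : 0 < b := ha.trans_le hab
  have hpoly : 0 ≤ (r - 1) * (b - a) * (r + a * (1 + b)) := by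
    apply mul_nonneg (mul_nonneg _ _) _ <;> nlinarith
  rw [div_div_eq_mul_div, div_mul_eq_mul_div, div_div, div_le_div_iff₀ (by positivity)
    (by positivity)]
  field_simp
  nlinarith [hpoly]

theorem div_div_div_le_rpow {r a b : ℝ} (hr : 1 ≤ r) (ha : 0 < a) (hab : a ≤ b) :
    (r + a) / (1 + a) / ((r + b) / (1 + b)) ≤ r ^ (1 - a / b) :=
  (div_div_div_le_div_one_add_mul hr ha hab).trans <| div_one_add_mul_sub_one_le_rpow hr
    (div_nonneg ha.le (ha.le.trans hab)) ((div_le_one (ha.trans_le hab)).mpr hab)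

section Cone

variable {V : Type*} [NormedAddCommGroup V] [NormedSpace ℝ V] {C : Set V} {v w : V}

theorem ofReal_le_coneA {t : ℝ} (ht : 0 < t) (h : w - t • v ∈ C) :
    ENNReal.ofReal t ≤ coneA C v w :=
  le_sSup ⟨t, ⟨ht, h⟩, rfl⟩

theorem coneB_le_ofReal {s : ℝ} (hs : 0 < s) (h : s • v - w ∈ C) :
    coneB C v w ≤ ENNReal.ofReal s :=
  sInf_le ⟨s, ⟨hs, h⟩, rfl⟩

theorem ofReal_lt_coneA_iff {M : ℝ} :
    ENNReal.ofReal M < coneA C v w ↔ ∃ t, 0 < t ∧ w - t • v ∈ C ∧ M < t := by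
  simp only [coneA, lt_sSup_iff, Set.mem_image, Set.mem_ofPred_eq]
  constructor
  · rintro ⟨_, ⟨t, ⟨ht, h⟩, rfl⟩, hMt⟩
    exact ⟨t, ht, h, (ENNReal.ofReal_lt_ofReal_iff ht).mp hMt⟩
  · rintro ⟨t, ht, h, hMt⟩
    exact ⟨_, ⟨t, ⟨ht, h⟩, rfl⟩, (ENNReal.ofReal_lt_ofReal_iff ht).mpr hMt⟩

theorem coneB_lt_ofReal_iff {M : ℝ} (hM : 0 < M) :
    coneB C v w < ENNReal.ofReal M ↔ ∃ s, 0 < s ∧ s • v - w ∈ C ∧ s < M := by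
  simp only [coneB, sInf_lt_iff, Set.mem_image, Set.mem_ofPred_eq]
  constructor
  · rintro ⟨_, ⟨s, ⟨hs, h⟩, rfl⟩, hsM⟩
    exact ⟨s, hs, h, (ENNReal.ofReal_lt_ofReal_iff hM).mp hsM⟩
  · rintro ⟨s, hs, h, hsM⟩
    exact ⟨_, ⟨s, ⟨hs, h⟩, rfl⟩, (ENNReal.ofReal_lt_ofReal_iff hM).mpr hsM⟩

theorem coneB_div_coneA_le_ofReal_exp {Δ : ℝ} (h : coneTheta C v w ≤ Δ) :
    coneB C v w / coneA C v w ≤ ENNReal.ofReal (Real.exp Δ) := by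
  simpa [coneTheta, ENNReal.exp_log] using EReal.exp_monotone h

namespace IsClosedConvexCone

theorem neg_notMem_closure (hC : IsClosedConvexCone C) {u : V} (hu : u ∈ C) :
    -u ∉ closure C := by
  intro h
  rcases hC.closed h with h | h
  · exact hC.neg_not_mem u hu h
  · exact hC.zero_not_mem (neg_eq_zero.mp h ▸ hu)

/-- Arbitrarily large admissible `t` would put `-v = lim (t⁻¹ • w - v)` in the closure of `C`. -/
theorem coneA_ne_top (hC : IsClosedConvexCone C) (hv : v ∈ C) : coneA C v w ≠ ⊤ := by
  intro htop
  refine hC.neg_notMem_closure hv (Metric.mem_closure_iff.mpr fun ε hε => ?_)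
  have hlt : ENNReal.ofReal (‖w‖ / ε) < coneA C v w := htop ▸ ENNReal.ofReal_lt_top
  obtain ⟨t, ht, hmem, hlt⟩ := ofReal_lt_coneA_iff.mp hlt
  refine ⟨t⁻¹ • (w - t • v), hC.smul_mem _ hmem _ (inv_pos.mpr ht), ?_⟩
  rw [smul_sub, smul_smul, inv_mul_cancel₀ ht.ne', one_smul, dist_eq_norm,
    show -v - (t⁻¹ • w - v) = -(t⁻¹ • w) by abel, norm_neg, norm_smul, norm_inv,
    Real.norm_of_nonneg ht.le, inv_mul_lt_iff₀ ht]
  rwa [div_lt_iff₀ hε] at hlt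

theorem coneB_ne_zero (hC : IsClosedConvexCone C) (hw : w ∈ C) : coneB C v w ≠ 0 := by
  intro hzero
  refine hC.neg_notMem_closure hw (Metric.mem_closure_iff.mpr fun ε hε => ?_)
  have hM : 0 < ε / (‖v‖ + 1) := by positivity
  obtain ⟨s, hs, hmem, hlt⟩ :=
    (coneB_lt_ofReal_iff hM).mp (hzero ▸ ENNReal.ofReal_pos.mpr hM)
  refine ⟨s • v - w, hmem, ?_⟩
  rw [dist_eq_norm, show -w - (s • v - w) = -(s • v) by abel, norm_neg, norm_smul,
    Real.norm_of_nonneg hs.le]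
  rw [lt_div_iff₀ (by positivity)] at hlt
  nlinarith [norm_nonneg v]

theorem lt_of_sub_smul_mem_of_smul_sub_mem (hC : IsClosedConvexCone C) (hv : v ∈ C)
    {t s : ℝ} (ht : w - t • v ∈ C) (hs : s • v - w ∈ C) : t < s := by
  have hsum : (s - t) • v ∈ C := by
    simpa [sub_smul] using hC.add_mem _ ht _ hs 1 1 one_pos one_pos
  by_contra! hst
  rcases hst.eq_or_lt with heq | hlt
  · exact hC.zero_not_mem (by simpa [heq] using hsum)
  · exact hC.neg_not_mem _ (hC.smul_mem v hv (t - s) (sub_pos.mpr hlt))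
      (by rwa [← neg_smul, neg_sub])

theorem coneA_le_coneB (hC : IsClosedConvexCone C) (hv : v ∈ C) :
    coneA C v w ≤ coneB C v w := by
  refine sSup_le ?_
  rintro _ ⟨t, ⟨-, ht⟩, rfl⟩
  refine le_sInf ?_
  rintro _ ⟨s, ⟨-, hs⟩, rfl⟩
  exact ENNReal.ofReal_le_ofReal (hC.lt_of_sub_smul_mem_of_smul_sub_mem hv ht hs).le

theorem coneA_ne_zero (hC : IsClosedConvexCone C) (hw : w ∈ C)
    (h : coneTheta C v w ≠ ⊤) : coneA C v w ≠ 0 := by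
  intro h0
  simp_all [coneTheta, ENNReal.div_eq_top, hC.coneB_ne_zero hw]

theorem coneB_ne_top (hC : IsClosedConvexCone C) (hv : v ∈ C)
    (h : coneTheta C v w ≠ ⊤) : coneB C v w ≠ ⊤ := by
  intro htop
  simp_all [coneTheta, ENNReal.div_eq_top, hC.coneA_ne_top hv]

end IsClosedConvexCone

theorem exists_seq_tendsto_coneA (h0 : coneA C v w ≠ 0) (htop : coneA C v w ≠ ⊤) :
    ∃ t : ℕ → ℝ, (∀ n, 0 < t n ∧ w - t n • v ∈ C) ∧
      Tendsto t atTop (𝓝 (coneA C v w).toReal) := by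
  have hne : (ENNReal.ofReal '' {t : ℝ | 0 < t ∧ w - t • v ∈ C}).Nonempty :=
    Set.nonempty_iff_ne_empty.mpr fun he => h0 (by rw [coneA, he, sSup_empty, bot_eq_zero])
  obtain ⟨u, -, hu, hmem⟩ := exists_seq_tendsto_sSup hne (OrderTop.bddAbove _)
  choose t ht hut using hmem
  refine ⟨t, ht, ?_⟩
  have ht_eq : t = fun n => (u n).toReal := funext fun n => by
    rw [← hut n, ENNReal.toReal_ofReal (ht n).1.le]
  rw [ht_eq]
  exact (ENNReal.tendsto_toReal htop).comp hu

theorem exists_seq_tendsto_coneB (htop : coneB C v w ≠ ⊤) :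
    ∃ s : ℕ → ℝ, (∀ n, 0 < s n ∧ s n • v - w ∈ C) ∧
      Tendsto s atTop (𝓝 (coneB C v w).toReal) := by
  have hne : (ENNReal.ofReal '' {s : ℝ | 0 < s ∧ s • v - w ∈ C}).Nonempty :=
    Set.nonempty_iff_ne_empty.mpr fun he => htop (by rw [coneB, he, sInf_empty])
  obtain ⟨u, -, hu, hmem⟩ := exists_seq_tendsto_sInf hne (OrderBot.bddBelow _)
  choose s hs hus using hmem
  refine ⟨s, hs, ?_⟩
  have hs_eq : s = fun n => (u n).toReal := funext fun n => by
    rw [← hus n, ENNReal.toReal_ofReal (hs n).1.le]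
  rw [hs_eq]
  exact (ENNReal.tendsto_toReal htop).comp hu

theorem le_ofReal_toReal_of_forall_admissible {X : ℝ≥0∞} {g : ℝ → ℝ → ℝ}
    (hA0 : coneA C v w ≠ 0) (hAtop : coneA C v w ≠ ⊤) (hBtop : coneB C v w ≠ ⊤)
    (hg : ContinuousAt (Function.uncurry g) ((coneA C v w).toReal, (coneB C v w).toReal))
    (hX : ∀ t s, 0 < t → w - t • v ∈ C → 0 < s → s • v - w ∈ C →
      X ≤ ENNReal.ofReal (g t s)) :
    X ≤ ENNReal.ofReal (g (coneA C v w).toReal (coneB C v w).toReal) := by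
  obtain ⟨t, ht, htlim⟩ := exists_seq_tendsto_coneA hA0 hAtop
  obtain ⟨s, hs, hslim⟩ := exists_seq_tendsto_coneB hBtop
  have hlim : Tendsto (fun n => ENNReal.ofReal (g (t n) (s n))) atTop
      (𝓝 (ENNReal.ofReal (g (coneA C v w).toReal (coneB C v w).toReal))) :=
    (ENNReal.continuous_ofReal.tendsto _).comp (hg.tendsto.comp (htlim.prodMk_nhds hslim))
  exact ge_of_tendsto' hlim fun n => hX _ _ (ht n).1 (ht n).2 (hs n).1 (hs n).2

/-- With `x = w - t v`, `y = s v - w` and `r = s / t`: `y - a x = (1 + a) (s' v - w)` and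
`b x - y = (1 + b) (w - t' v)`, where `s' = t (r + a) / (1 + a)` and `t' = t (r + b) / (1 + b)`. -/
theorem IsCone.coneB_div_coneA_le (hC : IsCone C) {t s a b : ℝ} (ht : 0 < t) (hs : 0 < s)
    (ha : 0 < a) (hb : 0 < b) (hya : (s • v - w) - a • (w - t • v) ∈ C)
    (hyb : b • (w - t • v) - (s • v - w) ∈ C) :
    coneB C v w / coneA C v w
      ≤ ENNReal.ofReal ((s / t + a) / (1 + a) / ((s / t + b) / (1 + b))) := by
  have hB : coneB C v w ≤ ENNReal.ofReal (t * ((s / t + a) / (1 + a))) := by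
    refine coneB_le_ofReal (by positivity) ?_
    convert hC.smul_mem _ hya (1 + a)⁻¹ (by positivity) using 1
    match_scalars <;> field_simp <;> ring
  have hA : ENNReal.ofReal (t * ((s / t + b) / (1 + b))) ≤ coneA C v w := by
    refine ofReal_le_coneA (by positivity) ?_
    convert hC.smul_mem _ hyb (1 + b)⁻¹ (by positivity) using 1
    match_scalars <;> field_simp <;> ring
  calc coneB C v w / coneA C v w
      ≤ ENNReal.ofReal (t * ((s / t + a) / (1 + a))) /
          ENNReal.ofReal (t * ((s / t + b) / (1 + b))) := ENNReal.div_le_div hB hA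
    _ = _ := by
      rw [← ENNReal.ofReal_div_of_pos (by positivity), mul_div_mul_left _ _ ht.ne']

theorem IsClosedConvexCone.coneB_div_coneA_le_rpow (hC : IsClosedConvexCone C) (hv : v ∈ C)
    {t s Δ : ℝ} (ht : 0 < t) (hx : w - t • v ∈ C) (hy : s • v - w ∈ C)
    (hΘ : coneTheta C (w - t • v) (s • v - w) ≤ Δ) :
    coneB C v w / coneA C v w ≤ ENNReal.ofReal ((s / t) ^ (1 - Real.exp (-Δ))) := by
  set x := w - t • v
  set y := s • v - w
  have hts : t < s := hC.lt_of_sub_smul_mem_of_smul_sub_mem hv hx hy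
  have hr : 1 ≤ s / t := (one_le_div ht).mpr hts.le
  have hfin : coneTheta C x y ≠ ⊤ := ne_top_of_le_ne_top (EReal.coe_ne_top Δ) hΘ
  have hA0 := hC.coneA_ne_zero hy hfin
  have hAtop := hC.coneA_ne_top (w := y) hx
  have hBtop := hC.coneB_ne_top hx hfin
  set α := (coneA C x y).toReal
  set β := (coneB C x y).toReal
  have hα : 0 < α := ENNReal.toReal_pos hA0 hAtop
  have hαβ : α ≤ β := ENNReal.toReal_mono hBtop (hC.coneA_le_coneB hx)
  have hβα : β / α ≤ Real.exp Δ := by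
    have := ENNReal.toReal_mono ENNReal.ofReal_ne_top (coneB_div_coneA_le_ofReal_exp hΘ)
    rwa [ENNReal.toReal_div, ENNReal.toReal_ofReal (Real.exp_pos Δ).le] at this
  have hexp : Real.exp (-Δ) ≤ α / β := by
    rw [Real.exp_neg, ← inv_div]
    exact inv_anti₀ (div_pos (hα.trans_le hαβ) hα) hβα
  have hlim : coneB C v w / coneA C v w
      ≤ ENNReal.ofReal ((s / t + α) / (1 + α) / ((s / t + β) / (1 + β))) := by
    refine le_ofReal_toReal_of_forall_admissible
      (g := fun a b => (s / t + a) / (1 + a) / ((s / t + b) / (1 + b))) hA0 hAtop hBtop ?_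
      fun a b ha hya hb hyb => hC.coneB_div_coneA_le ht (ht.trans hts) ha hb hya hyb
    have : 0 < s / t := by positivity
    fun_prop (disch := positivity)
  refine hlim.trans (ENNReal.ofReal_le_ofReal ?_)
  calc (s / t + α) / (1 + α) / ((s / t + β) / (1 + β)) ≤ (s / t) ^ (1 - α / β) :=
        div_div_div_le_rpow hr hα hαβ
    _ ≤ (s / t) ^ (1 - Real.exp (-Δ)) :=
        Real.rpow_le_rpow_of_exponent_le hr (by linarith)

end Cone

/-- Birkhoff's contraction theorem: if `L` is linear, maps the closed convex cone `C₁`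
into the closed convex cone `C₂`, and `L(C₁)` has finite `Θ₂`-diameter `Δ`, then
`Θ₂(Lφ, Lψ) ≤ (1 - e^{-Δ}) Θ₁(φ, ψ)` for all `φ, ψ ∈ C₁`. -/
theorem stmt_6 {V₁ V₂ : Type*} [NormedAddCommGroup V₁] [NormedSpace ℝ V₁]
    [NormedAddCommGroup V₂] [NormedSpace ℝ V₂]
    (C₁ : Set V₁) (C₂ : Set V₂)
    (hC₁ : IsClosedConvexCone C₁) (hC₂ : IsClosedConvexCone C₂)
    (L : V₁ →ₗ[ℝ] V₂) (hmaps : ∀ v ∈ C₁, L v ∈ C₂)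
    (Δ : ℝ) (hΔ0 : 0 ≤ Δ)
    (hdiam : ∀ v ∈ C₁, ∀ w ∈ C₁, coneTheta C₂ (L v) (L w) ≤ (Δ : EReal)) :
    ∀ φ ∈ C₁, ∀ ψ ∈ C₁,
      coneTheta C₂ (L φ) (L ψ) ≤ ((1 - Real.exp (-Δ) : ℝ) : EReal) * coneTheta C₁ φ ψ := by
  intro φ hφ ψ hψ
  rcases hΔ0.eq_or_lt with rfl | hΔ
  · simpa using hdiam φ hφ ψ hψ
  by_cases hT : coneTheta C₁ φ ψ = ⊤
  · rw [hT, EReal.coe_mul_top_of_pos (by simpa using hΔ)]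
    exact le_top
  have hA0 := hC₁.coneA_ne_zero hψ hT
  have hAtop := hC₁.coneA_ne_top (w := ψ) hφ
  have hBtop := hC₁.coneB_ne_top hφ hT
  have hc : 0 ≤ 1 - Real.exp (-Δ) := by simpa using hΔ0
  have hcont : ContinuousAt (fun p : ℝ × ℝ => (p.2 / p.1) ^ (1 - Real.exp (-Δ)))
      ((coneA C₁ φ ψ).toReal, (coneB C₁ φ ψ).toReal) := by
    have : (coneA C₁ φ ψ).toReal ≠ 0 := (ENNReal.toReal_pos hA0 hAtop).ne'
    fun_prop (disch := first | assumption | exact Or.inr hc)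
  have hbound : coneB C₂ (L φ) (L ψ) / coneA C₂ (L φ) (L ψ)
      ≤ ENNReal.ofReal
          (((coneB C₁ φ ψ).toReal / (coneA C₁ φ ψ).toReal) ^ (1 - Real.exp (-Δ))) :=
    le_ofReal_toReal_of_forall_admissible (g := fun t s => (s / t) ^ (1 - Real.exp (-Δ)))
      hA0 hAtop hBtop hcont fun t s ht hx _ hy =>
        hC₂.coneB_div_coneA_le_rpow (hmaps φ hφ) ht (by simpa using hmaps _ hx)
          (by simpa using hmaps _ hy) (by simpa using hdiam _ hx _ hy)
  rw [← ENNReal.toReal_div, ← ENNReal.ofReal_rpow_of_nonneg ENNReal.toReal_nonneg hc,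
    ENNReal.ofReal_toReal (by simpa [coneTheta] using hT)] at hbound
  calc coneTheta C₂ (L φ) (L ψ)
      ≤ ENNReal.log ((coneB C₁ φ ψ / coneA C₁ φ ψ) ^ (1 - Real.exp (-Δ))) :=
        ENNReal.log_le_log hbound
    _ = _ := ENNReal.log_rpow
end

section
/- Let f: M → M be a topologically exact local homeomorphism of a compact metric space (for every open U there is n with f^n(U) = M), φ continuous, and let ν be a Borel probability measure satisfying L*ν = λν for the transfer operator L(ψ)(x) = Σ_{f(y)=x} e^{φ(y)} ψ(y) with λ > 0. Then ν gives positive measure to every nonempty open set; in particular supp(ν) = M. -/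
/-!
If `ν U = 0`, take a continuous `ψ ≥ 0` vanishing off `U` with `V := {ψ > 0}` nonempty. Then
`∫ ψ dν = 0`, so `∫ Lⁿψ dν = λⁿ ∫ ψ dν = 0` for all `n`. But for `n` with `fⁿ(V) = M`, every
point is `fⁿ z` with `z ∈ V`, and `Lⁿψ (fⁿ z) ≥ e^{Sₙφ(z)} ψ z > 0`; so the continuous
function `Lⁿψ` is everywhere positive and has positive integral.

`L` preserves continuity because near any point the fibres of the local homeomorphism `f` of a
compact space are enumerated bijectively by finitely many continuous local inverses.
-/

open MeasureTheory Finset Filter Topology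

section FiberSum

variable {X Y : Type*} [TopologicalSpace X] [TopologicalSpace Y]

lemma Continuous.eventually_preimage_singleton_subset [CompactSpace X] [T2Space Y] {f : X → Y}
    (hf : Continuous f) {O : Set X} (hO : IsOpen O) {y₀ : Y} (hy₀ : f ⁻¹' {y₀} ⊆ O) :
    ∀ᶠ y in 𝓝 y₀, f ⁻¹' {y} ⊆ O := by
  have hclosed : IsClosed (f '' Oᶜ) := hf.isClosedMap _ hO.isClosed_compl
  filter_upwards [hclosed.isOpen_compl.mem_nhds fun ⟨x, hxO, hx⟩ => hxO (hy₀ hx)] with y hy x hx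
  by_contra hxO
  exact hy ⟨x, hxO, hx⟩

lemma IsLocalHomeomorph.exists_localInverse {f : X → Y} (hf : IsLocalHomeomorph f) (x : X) :
    ∃ (s : Set X) (g : Y → X), IsOpen s ∧ x ∈ s ∧ Set.LeftInvOn g f s ∧
      ContinuousAt g (f x) ∧ ∀ᶠ y in 𝓝 (f x), f (g y) = y := by
  obtain ⟨e, hx, rfl⟩ := hf x
  exact ⟨e.source, e.symm, e.open_source, hx, fun _ hz => e.left_inv hz,
    e.continuousAt_symm (e.map_source hx),
    (e.open_target.eventually_mem (e.map_source hx)).mono fun _ hy => e.right_inv hy⟩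

lemma IsLocalHomeomorph.exists_eventually_bijOn_fiber [CompactSpace X] [T2Space X] [T2Space Y]
    {f : X → Y} (hf : IsLocalHomeomorph f) {pre : Y → Finset X}
    (hpre : ∀ y x, x ∈ pre y ↔ f x = y) (y₀ : Y) :
    ∃ g : X → Y → X, (∀ x ∈ pre y₀, ContinuousAt (g x) y₀) ∧
      ∀ᶠ y in 𝓝 y₀, Set.BijOn (fun x => g x y) (pre y₀) (pre y) := by
  choose s g hs hxs hleft hcont hright using hf.exists_localInverse
  have hfib : ∀ x ∈ pre y₀, f x = y₀ := fun x hx => (hpre y₀ x).1 hx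
  have hcont' : ∀ x ∈ pre y₀, ContinuousAt (g x) y₀ := fun x hx => hfib x hx ▸ hcont x
  have hgy₀ : ∀ x ∈ pre y₀, g x y₀ = x := fun x hx => hfib x hx ▸ hleft x (hxs x)
  refine ⟨g, hcont', ?_⟩
  have hmaps : ∀ᶠ y in 𝓝 y₀, ∀ x ∈ pre y₀, f (g x y) = y :=
    (eventually_all_finset _).2 fun x hx => hfib x hx ▸ hright x
  have hinj : ∀ᶠ y in 𝓝 y₀, ∀ x ∈ pre y₀, ∀ x' ∈ pre y₀, x ≠ x' → g x y ≠ g x' y := by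
    refine (eventually_all_finset _).2 fun x hx => (eventually_all_finset _).2 fun x' hx' => ?_
    by_cases hxx' : x = x'
    · exact Eventually.of_forall fun _ h => absurd hxx' h
    · have hne : g x y₀ ≠ g x' y₀ := by
        rwa [hgy₀ x hx, hgy₀ x' hx']
      exact ((hcont' x hx).ne_iff_eventually_ne (hcont' x' hx')).1 hne |>.mono fun _ h _ => h
  have hsurj : ∀ᶠ y in 𝓝 y₀, f ⁻¹' {y} ⊆ ⋃ x ∈ pre y₀, s x :=
    hf.continuous.eventually_preimage_singleton_subset (isOpen_biUnion fun x _ => hs x)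
      fun x hx => Set.mem_biUnion ((hpre y₀ x).2 hx) (hxs x)
  filter_upwards [hmaps, hinj, hsurj] with y hmaps hinj hsurj
  refine ⟨fun x hx => (hpre y _).2 (hmaps x hx), fun x hx x' hx' h => ?_, fun z hz => ?_⟩
  · by_contra hxx'
    exact hinj x hx x' hx' hxx' h
  · have hzy : f z = y := (hpre y z).1 hz
    obtain ⟨x, hx, hzs⟩ := Set.mem_iUnion₂.1 (hsurj hzy)
    exact ⟨x, hx, by simp only [← hzy, hleft x hzs]⟩

theorem IsLocalHomeomorph.continuous_sum_fiber [CompactSpace X] [T2Space X] [T2Space Y]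
    {E : Type*} [AddCommMonoid E] [TopologicalSpace E] [ContinuousAdd E]
    {f : X → Y} (hf : IsLocalHomeomorph f) {pre : Y → Finset X}
    (hpre : ∀ y x, x ∈ pre y ↔ f x = y) {h : X → E} (hh : Continuous h) :
    Continuous fun y => ∑ x ∈ pre y, h x := by
  refine continuous_iff_continuousAt.2 fun y₀ => ?_
  obtain ⟨g, hg, hbij⟩ := hf.exists_eventually_bijOn_fiber hpre y₀
  have hlocal : ContinuousAt (fun y => ∑ x ∈ pre y₀, h (g x y)) y₀ :=
    tendsto_finsetSum _ fun x hx => hh.continuousAt.comp (hg x hx)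
  refine hlocal.congr ?_
  filter_upwards [hbij] with y hy
  exact Finset.sum_nbij _ hy.mapsTo hy.injOn hy.surjOn fun _ _ => rfl

end FiberSum

section TransferOperator

variable {M : Type*} (w : M → ℝ) (pre : M → Finset M)

def transferOperator (ψ : M → ℝ) (x : M) : ℝ :=
  ∑ y ∈ pre x, w y * ψ y

lemma transferOperator_iterate_nonneg (hw : 0 ≤ w) {ψ : M → ℝ} (hψ : 0 ≤ ψ) (n : ℕ) :
    0 ≤ (transferOperator w pre)^[n] ψ :=
  Function.Iterate.rec (fun χ => 0 ≤ χ) hψ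
    (fun _ hχ _ => Finset.sum_nonneg fun y _ => mul_nonneg (hw y) (hχ y)) n

lemma transferOperator_iterate_apply_iterate_pos {f : M → M}
    (hpre : ∀ x y, y ∈ pre x ↔ f y = x) (hw : ∀ y, 0 < w y) {ψ : M → ℝ} (hψ : 0 ≤ ψ)
    {z : M} (hz : 0 < ψ z) (n : ℕ) :
    0 < (transferOperator w pre)^[n] ψ (f^[n] z) := by
  induction n with
  | zero => exact hz
  | succ n ih =>
    rw [Function.iterate_succ_apply', Function.iterate_succ_apply']
    exact Finset.sum_pos'
      (fun y _ => mul_nonneg (hw y).le (transferOperator_iterate_nonneg w pre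
        (fun y => (hw y).le) hψ n y))
      ⟨f^[n] z, (hpre _ _).2 rfl, mul_pos (hw _) ih⟩

variable [TopologicalSpace M] [CompactSpace M] [T2Space M] {f : M → M}
  (hf : IsLocalHomeomorph f) (hpre : ∀ x y, y ∈ pre x ↔ f y = x) (hw : Continuous w)
include hf hpre hw

lemma continuous_transferOperator_iterate {ψ : M → ℝ} (hψ : Continuous ψ) (n : ℕ) :
    Continuous ((transferOperator w pre)^[n] ψ) :=
  Function.Iterate.rec Continuous hψ (fun _ hχ => hf.continuous_sum_fiber hpre (hw.mul hχ)) n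

lemma integral_transferOperator_iterate [MeasurableSpace M] {ν : Measure M}
    {lam : ℝ} (hdual : ∀ ψ : M → ℝ, Continuous ψ →
      ∫ x, transferOperator w pre ψ x ∂ν = lam * ∫ x, ψ x ∂ν)
    {ψ : M → ℝ} (hψ : Continuous ψ) (n : ℕ) :
    ∫ x, (transferOperator w pre)^[n] ψ x ∂ν = lam ^ n * ∫ x, ψ x ∂ν := by
  induction n with
  | zero => simp
  | succ n ih =>
    rw [Function.iterate_succ_apply',
      hdual _ (continuous_transferOperator_iterate w pre hf hpre hw hψ n), ih, pow_succ, mul_assoc,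
      mul_left_comm]

end TransferOperator

theorem stmt_10_general {M : Type*} [MetricSpace M] [CompactSpace M] [MeasurableSpace M]
    [BorelSpace M]
    (f : M → M) (hf : IsLocalHomeomorph f)
    (hexact : ∀ U : Set M, IsOpen U → U.Nonempty → ∃ n : ℕ, f^[n] '' U = Set.univ)
    (φ : M → ℝ) (hφ : Continuous φ)
    (pre : M → Finset M) (hpre : ∀ x y : M, y ∈ pre x ↔ f y = x)
    (lam : ℝ)
    (ν : Measure M) [IsProbabilityMeasure ν]
    (hdual : ∀ ψ : M → ℝ, Continuous ψ →
      ∫ x, (∑ y ∈ pre x, Real.exp (φ y) * ψ y) ∂ν = lam * ∫ x, ψ x ∂ν) :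
    ∀ U : Set M, IsOpen U → U.Nonempty → 0 < ν U := by
  intro U hU ⟨x₀, hx₀⟩
  obtain ⟨ψ, hψU, hψx₀, hψ01⟩ := exists_continuous_zero_one_of_isClosed hU.isClosed_compl
    isClosed_singleton (Set.disjoint_singleton_right.2 (Set.notMem_compl_iff.2 hx₀))
  have hψ : 0 ≤ ⇑ψ := fun x => (hψ01 x).1
  have hexp : Continuous fun y => Real.exp (φ y) := Real.continuous_exp.comp hφ
  set L := transferOperator (fun y => Real.exp (φ y)) pre
  obtain ⟨n, hn⟩ := hexact {x | 0 < ψ x} (isOpen_lt continuous_const ψ.continuous)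
    ⟨x₀, by simp [hψx₀ (Set.mem_singleton x₀)]⟩
  have hLpos : ∀ x, 0 < L^[n] ψ x := fun x => by
    obtain ⟨z, hz, rfl⟩ : x ∈ f^[n] '' {x | 0 < ψ x} := hn ▸ Set.mem_univ x
    exact transferOperator_iterate_apply_iterate_pos _ pre hpre (fun _ => Real.exp_pos _) hψ hz n
  have hLcont : Continuous (L^[n] ψ) :=
    continuous_transferOperator_iterate _ pre hf hpre hexp ψ.continuous n
  have hLint_pos : 0 < ∫ x, L^[n] ψ x ∂ν := by
    have hsupp : Function.support (L^[n] ψ) = Set.univ :=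
      Set.eq_univ_of_forall fun x => (hLpos x).ne'
    rw [integral_pos_iff_support_of_nonneg (fun x => (hLpos x).le)
      (hLcont.integrable_of_hasCompactSupport (.of_compactSpace _)), hsupp]
    simp
  by_contra hνU
  have hψint : ∫ x, ψ x ∂ν = 0 := by
    rw [← setIntegral_eq_integral_of_forall_compl_eq_zero fun x hx => hψU hx]
    exact setIntegral_measure_zero _ (nonpos_iff_eq_zero.1 (not_lt.1 hνU))
  rw [integral_transferOperator_iterate _ pre hf hpre hexp hdual ψ.continuous, hψint,
    mul_zero] at hLint_pos
  exact hLint_pos.false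

/-- If `f` is a topologically exact local homeomorphism of a compact metric space with
finitely many preimages at every point, `φ` is continuous, and `ν` is a Borel
probability with `L*ν = λ ν` (`λ > 0`), then `ν` gives positive measure to every
nonempty open set. -/
theorem stmt_10 {M : Type*} [MetricSpace M] [CompactSpace M] [MeasurableSpace M]
    [BorelSpace M]
    (f : M → M) (hf : IsLocalHomeomorph f)
    (hexact : ∀ U : Set M, IsOpen U → U.Nonempty → ∃ n : ℕ, f^[n] '' U = Set.univ)
    (φ : M → ℝ) (hφ : Continuous φ)
    (pre : M → Finset M) (hpre : ∀ x y : M, y ∈ pre x ↔ f y = x)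
    (lam : ℝ) (hlam : 0 < lam)
    (ν : Measure M) [IsProbabilityMeasure ν]
    (hdual : ∀ ψ : M → ℝ, Continuous ψ →
      ∫ x, (∑ y ∈ pre x, Real.exp (φ y) * ψ y) ∂ν = lam * ∫ x, ψ x ∂ν) :
    ∀ U : Set M, IsOpen U → U.Nonempty → 0 < ν U :=
  stmt_10_general f hf hexact φ hφ pre hpre lam ν hdual
end

section
/- Let L_j: M → (0,∞), j ≥ 0, be functions, c > 0, and x ∈ M a point such that limsup_{n→∞} (1/n) Σ_{j=0}^{n−1} log L_j(x_j)^{−1} ≤ −2c < 0, where x_j denotes the orbit. Then x has infinitely many c-hyperbolic times, i.e. there are infinitely many n ∈ ℕ such that Π_{j=n−k}^{n−1} L_j(x_j)^{−1} ≤ e^{−ck} for every 1 ≤ k ≤ n. -/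
open Finset Filter

/-!
Put `a j = log L_j(x_j)⁻¹` and `b n = Σ_{j<n} (a j + c)`. Since the averages of `a` are eventually
below `-3c/2`, we get `b n ≤ -(c/2) n → -∞`, so `b` attains a new strict minimum infinitely often.
At such a record time `n`, `b n ≤ b (n - k)` says exactly `Σ_{j=n-k}^{n-1} a j ≤ -c k`.
-/

/-- In `ℝ` an unbounded `u` has junk `limsup u f = 0`, which a nonpositive bound rules out. -/
lemma Real.eventually_lt_of_limsup_lt_of_nonpos {ι : Type*} {f : Filter ι} {u : ι → ℝ} {b : ℝ}
    (h : limsup u f < b) (hb : b ≤ 0) : ∀ᶠ i in f, u i < b := by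
  by_cases hu : f.IsBoundedUnder (· ≤ ·) u
  · exact eventually_lt_of_limsup_lt h hu
  · rw [Real.limsup_of_not_isBoundedUnder hu] at h
    exact absurd hb h.not_ge

lemma tendsto_sum_range_add_atBot_of_eventually_average_le {f : ℕ → ℝ} {c ε : ℝ} (hε : 0 < ε)
    (h : ∀ᶠ n : ℕ in atTop, (1 / (n : ℝ)) * ∑ j ∈ range n, f j ≤ -(c + ε)) :
    Tendsto (fun n => ∑ j ∈ range n, (f j + c)) atTop atBot := by
  refine tendsto_atBot_mono' atTop ?_
    ((tendsto_natCast_atTop_atTop (R := ℝ)).const_mul_atTop_of_neg (neg_lt_zero.mpr hε))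
  filter_upwards [h, eventually_ge_atTop 1] with n hn hn1
  have hpos : (0 : ℝ) < n := by exact_mod_cast hn1
  have hsum : ∑ j ∈ range n, f j ≤ -(c + ε) * n := by
    rwa [one_div_mul_eq_div, div_le_iff₀ hpos] at hn
  simp only [sum_add_distrib, sum_const, card_range, nsmul_eq_mul]
  linarith

lemma sum_Ico_sub_le_of_sum_range_add_le {f : ℕ → ℝ} {c : ℝ} {n k : ℕ} (hk : k ≤ n)
    (h : ∑ j ∈ range n, (f j + c) ≤ ∑ j ∈ range (n - k), (f j + c)) :
    ∑ j ∈ Ico (n - k) n, f j ≤ -c * k := by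
  have hIco : ∑ j ∈ Ico (n - k) n, (f j + c) ≤ 0 := by
    rw [sum_Ico_eq_sub _ (Nat.sub_le n k)]
    linarith
  rw [sum_add_distrib, sum_const, Nat.card_Ico, Nat.sub_sub_self hk, nsmul_eq_mul] at hIco
  linarith

theorem stmt_14_general {M : Type*} (L : ℕ → M → ℝ) (x : ℕ → M)
    (hLpos : ∀ j, 0 < L j (x j)) (c : ℝ) (hc : 0 < c)
    (hlimsup : Filter.limsup (fun n : ℕ =>
        (1 / (n : ℝ)) * ∑ j ∈ Finset.range n, Real.log ((L j (x j))⁻¹))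
      Filter.atTop ≤ -2 * c) :
    {n : ℕ | ∀ k : ℕ, 1 ≤ k → k ≤ n →
      ∏ j ∈ Finset.Ico (n - k) n, (L j (x j))⁻¹ ≤ Real.exp (-c * k)}.Infinite := by
  set a : ℕ → ℝ := fun j => Real.log (L j (x j))⁻¹
  have hav : ∀ᶠ n : ℕ in atTop, (1 / (n : ℝ)) * ∑ j ∈ range n, a j ≤ -(c + c / 2) :=
    (Real.eventually_lt_of_limsup_lt_of_nonpos (by linarith) (by linarith)).mono
      fun _ h => h.le
  have hb := tendsto_sum_range_add_atBot_of_eventually_average_le (half_pos hc) hav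
  refine (Nat.frequently_atTop_iff_infinite.mp (frequently_low_scores hb)).mono
    fun n hrec k hk1 hkn => ?_
  have hinv_pos : ∀ j, 0 < (L j (x j))⁻¹ := fun j => inv_pos.mpr (hLpos j)
  rw [← Real.log_le_iff_le_exp (prod_pos fun j _ => hinv_pos j),
    Real.log_prod fun j _ => (hinv_pos j).ne']
  exact sum_Ico_sub_le_of_sum_range_add_le hkn (hrec (n - k) (by omega)).le

/-- (Pliss-type lemma.) If along the orbit `(x_j)` the averages satisfy
`limsup (1/n) Σ_{j<n} log L_j(x_j)⁻¹ ≤ -2c < 0` (with `log L_j(x_j)⁻¹` uniformly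
bounded below), then there are infinitely many `c`-hyperbolic times `n`, i.e. `n` with
`Π_{j=n-k}^{n-1} L_j(x_j)⁻¹ ≤ e^{-ck}` for every `1 ≤ k ≤ n`. -/
theorem stmt_14 {M : Type*} (L : ℕ → M → ℝ) (x : ℕ → M)
    (hLpos : ∀ j, 0 < L j (x j)) (c : ℝ) (hc : 0 < c)
    (A : ℝ) (hbd : ∀ j, -A ≤ Real.log ((L j (x j))⁻¹))
    (hlimsup : Filter.limsup (fun n : ℕ =>
        (1 / (n : ℝ)) * ∑ j ∈ Finset.range n, Real.log ((L j (x j))⁻¹))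
      Filter.atTop ≤ -2 * c) :
    {n : ℕ | ∀ k : ℕ, 1 ≤ k → k ≤ n →
      ∏ j ∈ Finset.Ico (n - k) n, (L j (x j))⁻¹ ≤ Real.exp (-c * k)}.Infinite :=
  stmt_14_general L x hLpos c hc hlimsup
end
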